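/- Let D ≥ 1, each 𝒳^d finite, 𝒳 = ∏_d 𝒳^d. Fix x_0 ∈ 𝒳 with factorized strictly positive forward marginal q(x | x_0) = ∏_d q^d(x^d | x_0^d). Let the forward rate be r(z | x) := Σ_d r^d(z^d | x^d) δ_{x^{∖d}, z^{∖d}} for z ≠ x, and let S(z | x) := (1 − δ_{z,x}) Σ_d S^d(z^d | x^d) δ_{z^{∖d}, x^{∖d}} with S^d > 0 and normalizer 𝒮(x) > 0, and M(z | x_0) as the normalization scalar Σ_d Σ_{w ≠ z^d} (q^d(w | x_0^d)/q^d(z^d | x_0^d)) S^d(z^d | w)/𝒮(w ∘ z^{∖d}). Then for any function G : 𝒳 × 𝒳 → ℝ, Σ_x q(x | x_0) Σ_{z ≠ x} r(z | x) G(x, z) = Σ_x q(x | x_0) Σ_z (S(z | x)/𝒮(x)) · (1/M(z | x_0)) · Σ_{d=1}^D (1/q^d(z^d | x_0^d)) Σ_{w ∈ 𝒳^d, w ≠ z^d} q^d(w | x_0^d) r^d(z^d | w) G(w ∘ z^{∖d}, z). -/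

import Mathlib

/-- Unnormalized single-coordinate-change proposal kernel
`S(z|x) = (1 − δ_{z,x}) Σ_d S^d(z^d|x^d) δ_{z^{∖d},x^{∖d}}`. -/
def Sker {D : ℕ} {X : Fin D → Type*} [∀ d, Fintype (X d)] [∀ d, DecidableEq (X d)]
    (Sd : ∀ d, X d → X d → ℝ) (z x : ∀ d, X d) : ℝ :=
  (if z = x then 0 else 1)
    * ∑ d, Sd d (z d) (x d) * (if ∀ e, e ≠ d → z e = x e then (1 : ℝ) else 0)

/-- Normalization scalar
`M(z|x_0) = Σ_d Σ_{w ≠ z^d} (q^d(w|x_0^d)/q^d(z^d|x_0^d)) S^d(z^d|w)/𝒮(w ∘ z^{∖d})`. -/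
noncomputable def Mnorm {D : ℕ} {X : Fin D → Type*}
    [∀ d, Fintype (X d)] [∀ d, DecidableEq (X d)]
    (qd : ∀ d, X d → ℝ) (Sd : ∀ d, X d → X d → ℝ) (z : ∀ d, X d) : ℝ :=
  ∑ d, ∑ w ∈ Finset.univ.erase (z d),
    (qd d w / qd d (z d)) * Sd d (z d) w
      / ∑ z', Sker Sd z' (Function.update z d w)

/-!
Both sides equal `Σ_z Σ_d Σ_{w ≠ z^d} q(w ∘ z^{∖d}) r^d(z^d | w) G(w ∘ z^{∖d}, z)`.
On the left this is the change of variables `(x, v) ↦ (x with v at coordinate d, x^d)`, an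
involution exchanging a state with its single-coordinate neighbour. On the right, summing
`q(x) S(z | x) / 𝒮(x)` over `x` gives `q(z) M(z | x_0)`, which cancels the weight
`1 / M(z | x_0)`.
-/

open Finset Function

theorem sum_mul_sum_mul_eq_sum_sum_mul {α β R : Type*} [Fintype α] [Fintype β]
    [CommSemiring R] (a : α → R) (b : α → β → R) (c : β → R) :
    ∑ x, a x * ∑ z, b x z * c z = ∑ z, (∑ x, a x * b x z) * c z := by
  simp only [mul_sum, sum_mul]
  rw [sum_comm]
  simp only [mul_assoc]

section SingleCoordinateMoves

variable {ι : Type*} [Fintype ι] [DecidableEq ι] {X : ι → Type*}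

theorem prod_apply_update_eq_mul_div {K : Type*} [Field K] (f : ∀ i, X i → K)
    (z : ∀ i, X i) (i : ι) (w : X i) (hz : f i (z i) ≠ 0) :
    ∏ j, f j (update z i w j) = (∏ j, f j (z j)) * (f i w / f i (z i)) := by
  simp only [apply_update f, prod_update_of_mem (mem_univ i)]
  rw [← mul_prod_erase univ _ (mem_univ i), ← sdiff_singleton_eq_erase]
  field_simp

variable [∀ i, Fintype (X i)] [∀ i, DecidableEq (X i)]

-- The `Decidable` binders let these lemmas match the instance `Nat.decidableForallFin` of `Fin D`.
theorem filter_agree_off_erase_eq_image_update (z : ∀ i, X i) (i : ι)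
    [∀ x : ∀ j, X j, Decidable (∀ j, j ≠ i → z j = x j)] :
    filter (fun x : ∀ j, X j => ∀ j, j ≠ i → z j = x j) (univ.erase z)
      = (univ.erase (z i)).image (update z i) := by
  ext x
  simp only [mem_filter, mem_erase, mem_univ, and_true, mem_image]
  constructor
  · rintro ⟨hxz, hagree⟩
    have hx : update z i (x i) = x := update_eq_iff.2 ⟨rfl, fun j hj => hagree j hj⟩
    refine ⟨x i, fun h => hxz ?_, hx⟩
    rw [← hx, h, update_eq_self]
  · rintro ⟨w, hw, rfl⟩
    exact ⟨fun h => hw (by simpa using congrFun h i), fun j hj => (update_of_ne hj w z).symm⟩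

theorem sum_erase_ite_agree_off_eq_sum_update {M : Type*} [AddCommMonoid M]
    (z : ∀ i, X i) (i : ι) [∀ x : ∀ j, X j, Decidable (∀ j, j ≠ i → z j = x j)]
    (g : (∀ j, X j) → M) :
    ∑ x ∈ univ.erase z, (if ∀ j, j ≠ i → z j = x j then g x else 0)
      = ∑ w ∈ univ.erase (z i), g (update z i w) := by
  rw [← sum_filter, filter_agree_off_erase_eq_image_update,
    sum_image (update_injective z i).injOn]

theorem sum_erase_sum_ite_agree_off_eq_sum_update {M : Type*} [AddCommMonoid M]
    (z : ∀ i, X i) [∀ i (x : ∀ j, X j), Decidable (∀ j, j ≠ i → z j = x j)]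
    (g : ι → (∀ j, X j) → M) :
    ∑ x ∈ univ.erase z, ∑ i, (if ∀ j, j ≠ i → z j = x j then g i x else 0)
      = ∑ i, ∑ w ∈ univ.erase (z i), g i (update z i w) := by
  rw [sum_comm]
  exact sum_congr rfl fun i _ => sum_erase_ite_agree_off_eq_sum_update z i (g i)

def updateSwap (i : ι) : Equiv.Perm ((∀ j, X j) × X i) where
  toFun p := (update p.1 i p.2, p.1 i)
  invFun p := (update p.1 i p.2, p.1 i)
  left_inv p := by simp
  right_inv p := by simp

theorem sum_sum_erase_update_swap {M : Type*} [AddCommMonoid M] (i : ι)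
    (F : (∀ j, X j) → X i → M) :
    ∑ x, ∑ v ∈ univ.erase (x i), F x v
      = ∑ z, ∑ w ∈ univ.erase (z i), F (update z i w) (z i) := by
  simp only [← filter_ne', sum_filter, ← Fintype.sum_prod_type']
  rw [← Equiv.sum_comp (updateSwap i)]
  refine Fintype.sum_congr _ _ fun p => ?_
  simp [updateSwap, eq_comm]

theorem sum_prod_mul_sum_erase_rate_eq_sum_update {R : Type*} [CommSemiring R] (qd : ∀ i, X i → R)
    (rd : ∀ i, X i → X i → R) (G : (∀ i, X i) → (∀ i, X i) → R)
    [∀ (x : ∀ j, X j) i (z : ∀ j, X j), Decidable (∀ j, j ≠ i → x j = z j)] :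
    ∑ x, (∏ i, qd i (x i)) * ∑ z ∈ univ.erase x,
        (∑ i, rd i (z i) (x i) * (if ∀ j, j ≠ i → x j = z j then (1 : R) else 0)) * G x z
      = ∑ z, ∑ i, ∑ w ∈ univ.erase (z i),
          (∏ j, qd j (update z i w j)) * rd i (z i) w * G (update z i w) z := by
  calc _ = ∑ x, ∑ i, ∑ v ∈ univ.erase (x i),
          (∏ j, qd j (x j)) * rd i v (x i) * G x (update x i v) := by
        refine sum_congr rfl fun x _ => ?_
        simp only [sum_mul, mul_sum, mul_ite, mul_one, mul_zero, ite_mul, zero_mul]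
        rw [sum_erase_sum_ite_agree_off_eq_sum_update]
        simp only [update_self, mul_assoc]
    _ = ∑ i, ∑ x, ∑ v ∈ univ.erase (x i),
          (∏ j, qd j (x j)) * rd i v (x i) * G x (update x i v) := sum_comm
    _ = ∑ i, ∑ z, ∑ w ∈ univ.erase (z i),
          (∏ j, qd j (update z i w j)) * rd i (z i) w * G (update z i w) z := by
        refine sum_congr rfl fun i _ => ?_
        rw [sum_sum_erase_update_swap]
        simp only [update_self, update_idem, update_eq_self]
    _ = _ := sum_comm

theorem prod_mul_sum_div_eq_sum_update {K : Type*} [Field K] (qd : ∀ i, X i → K)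
    (rd : ∀ i, X i → X i → K) (G : (∀ i, X i) → (∀ i, X i) → K) (z : ∀ i, X i)
    (hq : ∀ i, qd i (z i) ≠ 0) :
    (∏ i, qd i (z i)) * ∑ i, (1 / qd i (z i))
        * ∑ w ∈ univ.erase (z i), qd i w * rd i (z i) w * G (update z i w) z
      = ∑ i, ∑ w ∈ univ.erase (z i),
          (∏ j, qd j (update z i w j)) * rd i (z i) w * G (update z i w) z := by
  simp only [mul_sum]
  refine sum_congr rfl fun i _ => sum_congr rfl fun w _ => ?_
  rw [prod_apply_update_eq_mul_div qd z i w (hq i)]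
  ring

end SingleCoordinateMoves

section ProposalKernel

variable {D : ℕ} {X : Fin D → Type*} [∀ d, Fintype (X d)] [∀ d, DecidableEq (X d)]

theorem sum_prod_mul_Sker_div_eq_prod_mul_Mnorm (qd : ∀ d, X d → ℝ)
    (Sd : ∀ d, X d → X d → ℝ) (z : ∀ d, X d) (hq : ∀ d, qd d (z d) ≠ 0) :
    ∑ x, (∏ d, qd d (x d)) * (Sker Sd z x / ∑ z', Sker Sd z' x)
      = (∏ d, qd d (z d)) * Mnorm qd Sd z := by
  calc _ = ∑ x ∈ univ.erase z, ∑ d, (if ∀ e, e ≠ d → z e = x e then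
          (∏ e, qd e (x e)) * Sd d (z d) (x d) / ∑ z', Sker Sd z' x else 0) := by
        rw [← add_sum_erase _ _ (mem_univ z)]
        simp only [Sker, if_pos, zero_mul, zero_div, mul_zero, zero_add]
        refine sum_congr rfl fun x hx => ?_
        rw [if_neg (ne_of_mem_erase hx).symm, one_mul, sum_div, mul_sum]
        refine sum_congr rfl fun d _ => ?_
        split_ifs <;> ring
    _ = ∑ d, ∑ w ∈ univ.erase (z d), (∏ e, qd e (update z d w e)) * Sd d (z d) w
          / ∑ z', Sker Sd z' (update z d w) := by
        rw [sum_erase_sum_ite_agree_off_eq_sum_update]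
        simp only [update_self]
    _ = _ := by
        simp only [Mnorm, mul_sum]
        refine sum_congr rfl fun d _ => sum_congr rfl fun w _ => ?_
        rw [prod_apply_update_eq_mul_div qd z d w (hq d)]
        ring

theorem Mnorm_pos_of_ne (qd : ∀ d, X d → ℝ) (Sd : ∀ d, X d → X d → ℝ)
    (hq : ∀ d v, 0 < qd d v) (hS : ∀ d b a, 0 < Sd d b a)
    (hSnorm : ∀ x : ∀ d, X d, 0 < ∑ z, Sker Sd z x) {z : ∀ d, X d} {d : Fin D} {w : X d}
    (hw : w ≠ z d) : 0 < Mnorm qd Sd z := by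
  have hterm : ∀ d (w : X d), 0 < qd d w / qd d (z d) * Sd d (z d) w
      / ∑ z', Sker Sd z' (update z d w) := fun d w => by
    have := hq d w; have := hq d (z d); have := hS d (z d) w; have := hSnorm (update z d w)
    positivity
  exact sum_pos' (fun d _ => sum_nonneg fun w _ => (hterm d w).le)
    ⟨d, mem_univ d, sum_pos (fun w _ => hterm d w) ⟨w, mem_erase.mpr ⟨hw, mem_univ w⟩⟩⟩

end ProposalKernel

theorem importance_sampling_exchange_general
    {D : ℕ} {X : Fin D → Type*}
    [∀ d, Fintype (X d)] [∀ d, DecidableEq (X d)]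
    (qd : ∀ d, X d → ℝ)  -- `qd d v = q^d(v | x_0^d)`
    (hqd_pos : ∀ d v, 0 < qd d v)
    (rd : ∀ d, X d → X d → ℝ)  -- `rd d a b = r^d(a | b)`
    (Sd : ∀ d, X d → X d → ℝ)  -- `Sd d b a = S^d(b | a)`
    (hSd_pos : ∀ d b a, 0 < Sd d b a)
    (hSnorm_pos : ∀ x : ∀ d, X d, 0 < ∑ z, Sker Sd z x)
    (G : (∀ d, X d) → (∀ d, X d) → ℝ) :
    (∑ x, (∏ d, qd d (x d))
        * ∑ z ∈ Finset.univ.erase x,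
            (∑ d, rd d (z d) (x d)
              * (if ∀ e, e ≠ d → x e = z e then (1 : ℝ) else 0)) * G x z)
      = ∑ x, (∏ d, qd d (x d))
          * ∑ z, (Sker Sd z x / ∑ z', Sker Sd z' x) * (1 / Mnorm qd Sd z)
              * ∑ d, (1 / qd d (z d))
                  * ∑ w ∈ Finset.univ.erase (z d),
                      qd d w * rd d (z d) w * G (Function.update z d w) z := by
  have hq : ∀ d v, qd d v ≠ 0 := fun d v => (hqd_pos d v).ne'
  rw [sum_prod_mul_sum_erase_rate_eq_sum_update]
  symm
  calc _ = ∑ z, (∑ x, (∏ d, qd d (x d)) * (Sker Sd z x / ∑ z', Sker Sd z' x))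
          * (1 / Mnorm qd Sd z) * ∑ d, (1 / qd d (z d))
            * ∑ w ∈ univ.erase (z d), qd d w * rd d (z d) w * G (update z d w) z := by
        simp only [mul_assoc]
        rw [sum_mul_sum_mul_eq_sum_sum_mul]
    _ = ∑ z, (∏ d, qd d (z d)) * ∑ d, (1 / qd d (z d))
            * ∑ w ∈ univ.erase (z d), qd d w * rd d (z d) w * G (update z d w) z := by
        refine sum_congr rfl fun z _ => ?_
        rw [sum_prod_mul_Sker_div_eq_prod_mul_Mnorm qd Sd z fun d => hq d (z d)]
        by_cases hM : Mnorm qd Sd z = 0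
        -- `M(z | x_0)` has a positive term for every index of the inner sums.
        · have hT : ∀ d, ∑ w ∈ univ.erase (z d),
              qd d w * rd d (z d) w * G (update z d w) z = 0 := fun d =>
            sum_eq_zero fun w hw => absurd hM
              (Mnorm_pos_of_ne qd Sd hqd_pos hSd_pos hSnorm_pos (ne_of_mem_erase hw)).ne'
          simp [hM, hT]
        · field_simp
    _ = _ := sum_congr rfl fun z _ => prod_mul_sum_div_eq_sum_update qd rd G z fun d => hq d (z d)

/-- The importance-sampling exchange of the expectation variable behind
Proposition 5: the expectation, over `x ∼ q(·|x_0)`, of the forward-rate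
weighted sum `Σ_{z≠x} r(z|x) G(x,z)` can be rewritten as an expectation over
the auxiliary variable `z ∼ S(·|x)/𝒮(x)` weighted by `1/M(z|x_0)`. -/
theorem importance_sampling_exchange
    {D : ℕ} (hD : 1 ≤ D) {X : Fin D → Type*}
    [∀ d, Fintype (X d)] [∀ d, DecidableEq (X d)]
    (qd : ∀ d, X d → ℝ)  -- `qd d v = q^d(v | x_0^d)`
    (hqd_pos : ∀ d v, 0 < qd d v) (hqd_sum : ∀ d, ∑ v, qd d v = 1)
    (rd : ∀ d, X d → X d → ℝ)  -- `rd d a b = r^d(a | b)`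
    (Sd : ∀ d, X d → X d → ℝ)  -- `Sd d b a = S^d(b | a)`
    (hSd_pos : ∀ d b a, 0 < Sd d b a)
    (hSnorm_pos : ∀ x : ∀ d, X d, 0 < ∑ z, Sker Sd z x)
    (G : (∀ d, X d) → (∀ d, X d) → ℝ) :
    (∑ x, (∏ d, qd d (x d))
        * ∑ z ∈ Finset.univ.erase x,
            (∑ d, rd d (z d) (x d)
              * (if ∀ e, e ≠ d → x e = z e then (1 : ℝ) else 0)) * G x z)
      = ∑ x, (∏ d, qd d (x d))
          * ∑ z, (Sker Sd z x / ∑ z', Sker Sd z' x) * (1 / Mnorm qd Sd z)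
              * ∑ d, (1 / qd d (z d))
                  * ∑ w ∈ Finset.univ.erase (z d),
                      qd d w * rd d (z d) w * G (Function.update z d w) z :=
  importance_sampling_exchange_general qd hqd_pos rd Sd hSd_pos hSnorm_pos G
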